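/- Gluing additivity of signed area: let c be a Lipschitz closed curve, 0 ≤ θ₁ < θ₂ < 2π, and γ : [θ₁,θ₂] → ℂ a Lipschitz path with γ(θ₁) = c(θ₁) and γ(θ₂) = c(θ₂). Let c₁ be the closed curve obtained by concatenating c restricted to S¹∖[θ₁,θ₂] with γ, and c₂ the closed curve obtained by concatenating c restricted to [θ₁,θ₂] with γ reversed. Then Area(c) = Area(c₁) + Area(c₂), where Area(c) = (1/2)∫ det(c(θ), c'(θ)) dθ. -/

import Mathlib

open MeasureTheory Real

/-- The planar determinant `det(z, w) = z₁w₂ - z₂w₁` of two vectors of `ℝ² ≅ ℂ`. -/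
def det2 (z w : ℂ) : ℝ := z.re * w.im - z.im * w.re

/-- The signed-area line integral `(1/2)∫_a^b det(f(θ), f'(θ)) dθ` of a Lipschitz path. -/
noncomputable def lineArea (f : ℝ → ℂ) (a b : ℝ) : ℝ :=
  (1 / 2) * ∫ θ in a..b, det2 (f θ) (deriv f θ)

lemma det2_neg (z w : ℂ) : det2 z (-w) = -det2 z w := by simp [det2]; ring

lemma abs_det2_le (z w : ℂ) : |det2 z w| ≤ 2 * ‖z‖ * ‖w‖ := by
  have h1 : |z.re * w.im - z.im * w.re| ≤ |z.re| * |w.im| + |z.im| * |w.re| :=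
    (abs_sub _ _).trans (by rw [abs_mul, abs_mul])
  refine h1.trans ?_
  have h2 := Complex.abs_re_le_norm z
  have h3 := Complex.abs_im_le_norm z
  have h4 := Complex.abs_re_le_norm w
  have h5 := Complex.abs_im_le_norm w
  have hz : (0:ℝ) ≤ ‖z‖ := norm_nonneg z
  have hw : (0:ℝ) ≤ ‖w‖ := norm_nonneg w
  nlinarith [abs_nonneg z.re, abs_nonneg z.im, abs_nonneg w.re, abs_nonneg w.im]

lemma key_integrable (f : ℝ → ℂ) (K : NNReal) (hf : LipschitzWith K f) (a b : ℝ) :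
    IntervalIntegrable (fun θ => det2 (f θ) (deriv f θ)) volume a b := by
  rw [intervalIntegrable_iff]
  apply Measure.integrableOn_of_bounded (M := 2 * (‖f 0‖ + K * (|a| + |b|)) * K)
  · exact (measure_Ioc_lt_top).ne
  · have hfm : Measurable f := hf.continuous.measurable
    have hdm : Measurable (deriv f) := measurable_deriv f
    exact (((Complex.measurable_re.comp hfm).mul (Complex.measurable_im.comp hdm)).sub
        ((Complex.measurable_im.comp hfm).mul (Complex.measurable_re.comp hdm))).aestronglyMeasurable
  · rw [ae_restrict_iff' measurableSet_uIoc]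
    filter_upwards with θ hθ
    have hθ' : |θ| ≤ |a| + |b| := by
      rw [Set.uIoc, Set.mem_Ioc] at hθ
      rw [abs_le]
      constructor
      · have h1 : -(|a| + |b|) ≤ a ⊓ b :=
          le_inf (by linarith [neg_abs_le a, abs_nonneg b]) (by linarith [neg_abs_le b, abs_nonneg a])
        linarith [hθ.1]
      · have h2 : a ⊔ b ≤ |a| + |b| :=
          sup_le (by linarith [le_abs_self a, abs_nonneg b]) (by linarith [le_abs_self b, abs_nonneg a])
        linarith [hθ.2]
    have hfb : ‖f θ‖ ≤ ‖f 0‖ + K * (|a| + |b|) := by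
      have := hf.dist_le_mul θ 0
      rw [Real.dist_eq, sub_zero] at this
      have h := (dist_triangle (f θ) (f 0) 0).trans_eq rfl
      have hd : ‖f θ‖ ≤ dist (f θ) (f 0) + ‖f 0‖ := by
        simpa [dist_eq_norm, add_comm] using norm_le_insert' (f θ) (f 0)
      have hK : (0:ℝ) ≤ K := K.coe_nonneg
      nlinarith
    have hdb : ‖deriv f θ‖ ≤ K := by
      simpa using norm_deriv_le_of_lipschitz (𝕜 := ℝ) hf (x₀ := θ)
    calc ‖det2 (f θ) (deriv f θ)‖ ≤ 2 * ‖f θ‖ * ‖deriv f θ‖ := abs_det2_le _ _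
    _ ≤ 2 * (‖f 0‖ + K * (|a| + |b|)) * K := by
        have hK : (0:ℝ) ≤ K := K.coe_nonneg
        have h0 : (0:ℝ) ≤ ‖f 0‖ := norm_nonneg _
        have ha : (0:ℝ) ≤ |a| + |b| := by positivity
        nlinarith [norm_nonneg (f θ), norm_nonneg (deriv f θ)]

lemma rev_integral (γ : ℝ → ℂ) (θ₁ θ₂ : ℝ) :
    (∫ θ in θ₁..θ₂, det2 ((fun θ => γ (θ₁ + θ₂ - θ)) θ) (deriv (fun θ => γ (θ₁ + θ₂ - θ)) θ))
      = - ∫ θ in θ₁..θ₂, det2 (γ θ) (deriv γ θ) := by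
  have hderiv : ∀ θ, deriv (fun θ => γ (θ₁ + θ₂ - θ)) θ = -deriv γ (θ₁ + θ₂ - θ) := fun θ =>
    deriv_comp_const_sub γ (θ₁ + θ₂) θ
  have : (∫ θ in θ₁..θ₂, det2 ((fun θ => γ (θ₁ + θ₂ - θ)) θ) (deriv (fun θ => γ (θ₁ + θ₂ - θ)) θ))
      = ∫ θ in θ₁..θ₂, -(fun s => det2 (γ s) (deriv γ s)) (θ₁ + θ₂ - θ) := by
    refine intervalIntegral.integral_congr fun θ _ => ?_
    simp only [hderiv, det2_neg]
  rw [this, intervalIntegral.integral_neg, intervalIntegral.integral_comp_sub_left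
    (fun s => det2 (γ s) (deriv γ s)) (θ₁ + θ₂)]
  ring_nf

/-- Gluing additivity of the signed area: cutting a closed curve `c` along a path `γ` joining
`c(θ₁)` to `c(θ₂)` produces two closed curves `c₁` (the part of `c` outside `[θ₁,θ₂]`
concatenated with `γ`) and `c₂` (the part of `c` on `[θ₁,θ₂]` concatenated with the reversed
path `γ̌`), and `Area(c) = Area(c₁) + Area(c₂)`, where the area of each concatenated closed
curve is the sum of the line integrals of its pieces. -/
theorem stmt13 (c γ : ℝ → ℂ) (K K' : NNReal) (hc : LipschitzWith K c)
    (hγ : LipschitzWith K' γ)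
    (hclosed : c 0 = c (2 * π))
    (θ₁ θ₂ : ℝ) (h0 : 0 ≤ θ₁) (h12 : θ₁ < θ₂) (h2 : θ₂ < 2 * π)
    (hγ1 : γ θ₁ = c θ₁) (hγ2 : γ θ₂ = c θ₂) :
    lineArea c 0 (2 * π)
      = (lineArea c 0 θ₁ + lineArea γ θ₁ θ₂ + lineArea c θ₂ (2 * π))   -- Area(c₁)
        + (lineArea c θ₁ θ₂ + lineArea (fun θ => γ (θ₁ + θ₂ - θ)) θ₁ θ₂) -- Area(c₂)
    := by
  have hI := fun a b => key_integrable c K hc a b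
  have hsplit : (∫ θ in (0:ℝ)..(2*π), det2 (c θ) (deriv c θ))
      = (∫ θ in (0:ℝ)..θ₁, det2 (c θ) (deriv c θ))
        + (∫ θ in θ₁..θ₂, det2 (c θ) (deriv c θ))
        + (∫ θ in θ₂..(2*π), det2 (c θ) (deriv c θ)) := by
    rw [intervalIntegral.integral_add_adjacent_intervals (hI 0 θ₁) (hI θ₁ θ₂),
      intervalIntegral.integral_add_adjacent_intervals (hI 0 θ₂) (hI θ₂ (2*π))]
  simp only [lineArea, rev_integral γ θ₁ θ₂, hsplit]
  ring
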